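/- arXiv:2208.03355 — 2 statements merged into one kernel-verified Lean document; each statement's English description precedes it below -/
import Mathlib

section
/- In a globally decisive blockchain tree, a block is accepted if and only if every cousin branch of the block is finite. -/
/-- `c` is a child of `b` in the blockchain tree given by `parent`. -/
def ChildOf {B : Type} (parent : B → Option B) (c b : B) : Prop := parent c = some b

/-- `b` is a (strict) ancestor of `c`. -/
def Anc {B : Type} (parent : B → Option B) (b c : B) : Prop :=
  Relation.TransGen (ChildOf parent) c b

/-- `b` is an ancestor of `c` or equal to it. -/
def AncOrEq {B : Type} (parent : B → Option B) (b c : B) : Prop :=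
  Relation.ReflTransGen (ChildOf parent) c b

/-- An infinite branch: a path from the root following the child relation. -/
def InfBranch {B : Type} (parent : B → Option B) (root : B) (f : ℕ → B) : Prop :=
  f 0 = root ∧ ∀ n, parent (f (n + 1)) = some (f n)

/-- A block is accepted if it is an ancestor of (or equal to) all but finitely many blocks. -/
def Accepted {B : Type} (parent : B → Option B) (b : B) : Prop :=
  {c | ¬ AncOrEq parent b c}.Finite

/-- A block is rejected if it is an ancestor of only finitely many blocks. -/
def Rejected {B : Type} (parent : B → Option B) (b : B) : Prop :=
  {c | Anc parent b c}.Finite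

/-- Globally decisive: every block is accepted or rejected but not both. -/
def GloballyDecisive {B : Type} (parent : B → Option B) : Prop :=
  ∀ b, (Accepted parent b ∨ Rejected parent b) ∧ ¬ (Accepted parent b ∧ Rejected parent b)

/-!
An accepted block `b` lies on every infinite branch, since a branch is an infinite set of blocks
and all but finitely many blocks descend from `b`, while a descendant of `b` on a branch forces `b`
onto the branch. Conversely, if `b` is not accepted it is rejected, so only finitely many blocks
descend from `b`; the tree is infinite (infinitely many blocks do not descend from `b`) and finitely
branching, so König's lemma gives an infinite branch along which every block has infinitely many
descendants, and this branch cannot pass through `b`.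
-/

variable {B : Type} {parent : B → Option B}

def Desc (parent : B → Option B) (x : B) : Set B := {c | AncOrEq parent x c}

lemma Rejected.desc_finite {b : B} (hb : Rejected parent b) : (Desc parent b).Finite := by
  refine (hb.insert b).subset fun c hc => ?_
  rcases Relation.reflTransGen_iff_eq_or_transGen.mp hc with rfl | h
  · exact Set.mem_insert _ _
  · exact Set.mem_insert_of_mem b h

lemma desc_subset_insert_biUnion_children (x : B) :
    Desc parent x ⊆ insert x (⋃ y ∈ {c | parent c = some x}, Desc parent y) := by
  intro c hc
  rcases Relation.ReflTransGen.cases_tail hc with rfl | ⟨y, hcy, hyx⟩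
  · exact Set.mem_insert _ _
  · exact Set.mem_insert_of_mem x (Set.mem_biUnion hyx hcy)

lemma exists_child_desc_infinite (hfin : ∀ b : B, {c | parent c = some b}.Finite) {x : B}
    (hx : (Desc parent x).Infinite) : ∃ y, parent y = some x ∧ (Desc parent y).Infinite := by
  by_contra! h
  exact hx (((hfin x).biUnion h).insert x |>.subset (desc_subset_insert_biUnion_children x))

/-- König's lemma for the descendant sets of a finitely branching tree. -/
lemma exists_infBranch_desc_infinite (hfin : ∀ b : B, {c | parent c = some b}.Finite) {root : B}
    (hroot : (Desc parent root).Infinite) :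
    ∃ f : ℕ → B, InfBranch parent root f ∧ ∀ n, (Desc parent (f n)).Infinite := by
  choose next hnext_parent hnext_inf using
    fun x : {x : B // (Desc parent x).Infinite} => exists_child_desc_infinite hfin x.2
  let step : {x : B // (Desc parent x).Infinite} → {x : B // (Desc parent x).Infinite} :=
    fun x => ⟨next x, hnext_inf x⟩
  refine ⟨fun n => (step^[n] ⟨root, hroot⟩).1, ⟨rfl, fun n => ?_⟩, fun n => (step^[n] _).2⟩
  simp only [Function.iterate_succ_apply']
  exact hnext_parent _

namespace InfBranch

variable {root : B} {f : ℕ → B}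

lemma injective (hroot : parent root = none) (hf : InfBranch parent root f) :
    Function.Injective f := by
  have hnone : parent (f 0) = none := hf.1 ▸ hroot
  intro n m h
  induction n generalizing m with
  | zero =>
    cases m with
    | zero => rfl
    | succ m => simpa [← h, hnone] using hf.2 m
  | succ n ih =>
    cases m with
    | zero => simpa [h, hnone] using hf.2 n
    | succ m => exact congrArg _ (ih (Option.some.inj ((hf.2 n).symm.trans (h ▸ hf.2 m))))

lemma mem_range_of_ancOrEq (hroot : parent root = none) (hf : InfBranch parent root f) {b : B}
    (n : ℕ) (hb : AncOrEq parent b (f n)) : b ∈ Set.range f := by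
  induction n with
  | zero =>
    rcases Relation.ReflTransGen.cases_head hb with h | ⟨d, hd, -⟩
    · exact ⟨0, h⟩
    · simp [ChildOf, hf.1, hroot] at hd
  | succ n ih =>
    rcases Relation.ReflTransGen.cases_head hb with h | ⟨d, hd, hdb⟩
    · exact ⟨n + 1, h⟩
    · have hd' : d = f n := Option.some.inj (hd.symm.trans (hf.2 n))
      exact ih (hd' ▸ hdb)

end InfBranch

lemma Accepted.mem_range_of_infBranch {root : B} (hroot : parent root = none) {b : B}
    (hb : Accepted parent b) {f : ℕ → B} (hf : InfBranch parent root f) : b ∈ Set.range f := by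
  by_contra hbf
  have hsub : Set.range f ⊆ {c | ¬ AncOrEq parent b c} := by
    rintro _ ⟨n, rfl⟩ hn
    exact hbf (hf.mem_range_of_ancOrEq hroot n hn)
  exact Set.infinite_range_of_injective (hf.injective hroot) (hb.subset hsub)

/-- In a globally decisive blockchain tree, a block is accepted iff every
cousin branch of the block is finite, i.e. iff every infinite branch contains the block. -/
theorem stmt_6 {B : Type} (root : B) (parent : B → Option B) (N : ℕ)
    (hroot : parent root = none)
    (hreach : ∀ b, AncOrEq parent root b)
    (harity : ∀ b : B, {c | parent c = some b}.Finite ∧ {c | parent c = some b}.ncard ≤ N)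
    (hdec : GloballyDecisive parent) :
    ∀ b : B, Accepted parent b ↔ ∀ f : ℕ → B, InfBranch parent root f → b ∈ Set.range f := by
  intro b
  refine ⟨fun hb f hf => hb.mem_range_of_infBranch hroot hf, fun hbr => ?_⟩
  by_contra hnacc
  have hrej : Rejected parent b := (hdec b).1.resolve_left hnacc
  have hroot_inf : (Desc parent root).Infinite := by
    have huniv : Desc parent root = Set.univ := Set.eq_univ_of_forall hreach
    exact huniv ▸ Set.Infinite.mono (Set.subset_univ _) hnacc
  obtain ⟨f, hf, hinf⟩ := exists_infBranch_desc_infinite (fun x => (harity x).1) hroot_inf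
  obtain ⟨m, rfl⟩ := hbr f hf
  exact hinf m hrej.desc_finite
end

section
/- In a locally decisive computation, every infinite branch of the blockchain belongs to a source pool. -/
/-- A journey from `m` to `m'` starting after round `r`: a nonempty temporal path of links
occurring in strictly increasing rounds, all after `r`. -/
def Journey {M : Type} (link : ℕ → M → M → Prop) (r : ℕ) (m m' : M) : Prop :=
  ∃ (k : ℕ) (f : ℕ → M) (t : ℕ → ℕ),
    0 < k ∧ f 0 = m ∧ f k = m' ∧
    (∀ i, i < k → link (t i) (f i) (f (i + 1))) ∧
    (∀ i, i < k → r < t i) ∧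
    (∀ i j, i < j → j < k → t i < t j)

/-- `m` has infinitely many journeys to `m'`: journeys starting arbitrarily late. -/
def InfJ {M : Type} (link : ℕ → M → M → Prop) (m m' : M) : Prop :=
  ∀ r : ℕ, Journey link r m m'

/-- The pool relation: equal, or infinitely many journeys in both directions. -/
def PoolRel {M : Type} (link : ℕ → M → M → Prop) (m m' : M) : Prop :=
  m = m' ∨ (InfJ link m m' ∧ InfJ link m' m)

/-- A mining pool: an equivalence class of the pool relation. -/
def IsPool {M : Type} (link : ℕ → M → M → Prop) (P : Set M) : Prop :=
  ∃ m : M, P = {m' | PoolRel link m m'}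

/-- Pool-graph edge: infinitely many rounds contain a link from `P1` to `P2`. -/
def PoolEdge {M : Type} (link : ℕ → M → M → Prop) (P1 P2 : Set M) : Prop :=
  ∀ r : ℕ, ∃ ρ, r < ρ ∧ ∃ m1 ∈ P1, ∃ m2 ∈ P2, link ρ m1 m2

/-- Edge of the pool graph (between pools). -/
def PGEdge {M : Type} (link : ℕ → M → M → Prop) (P1 P2 : Set M) : Prop :=
  IsPool link P1 ∧ IsPool link P2 ∧ PoolEdge link P1 P2

/-- A source pool: a pool with only finitely many journeys from outside miners into it,
i.e. no outside miner has infinitely many journeys to a pool member. -/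
def SourcePool {M : Type} (link : ℕ → M → M → Prop) (P : Set M) : Prop :=
  IsPool link P ∧ ∀ m, m ∉ P → ∀ m' ∈ P, ¬ InfJ link m m'

/-!
Since the branch eventually stays inside the finite pool `P`, some miner `m₀ ∈ P` mines
infinitely many of its blocks, at ever later rounds. Each of these blocks reaches every miner,
so `m₀` has infinitely many journeys to every other miner. An outsider `m` with infinitely many
journeys into `P` then has infinitely many journeys to `m₀` as well (through a pool mate of
`m₀`), so `m` and `m₀` are pool-related and `m ∈ P`, a contradiction.
-/

open Filter

section

variable {M : Type} {link : ℕ → M → M → Prop}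

theorem Journey.mono {r r' : ℕ} {m m' : M} (h : Journey link r m m') (hr : r' ≤ r) :
    Journey link r' m m' := by
  obtain ⟨k, g, t, hk, h0, hk', hl, ht, hs⟩ := h
  exact ⟨k, g, t, hk, h0, hk', hl, fun i hi => hr.trans_lt (ht i hi), hs⟩

theorem Journey.trans_infJ {r : ℕ} {m a b : M} (h₁ : Journey link r m a) (h₂ : InfJ link a b) :
    Journey link r m b := by
  obtain ⟨k₁, f₁, t₁, hk₁, hf₁0, hf₁k, hl₁, ht₁, hs₁⟩ := h₁
  have hlast : ∀ i < k₁, t₁ i ≤ t₁ (k₁ - 1) := fun i hi =>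
    (Nat.lt_or_ge i (k₁ - 1)).elim (fun h => (hs₁ i _ h (by omega)).le)
      (fun h => by rw [show i = k₁ - 1 by omega])
  -- the second leg starts after the last link of the first one
  obtain ⟨k₂, f₂, t₂, hk₂, hf₂0, hf₂k, hl₂, ht₂, hs₂⟩ := h₂ (t₁ (k₁ - 1))
  refine ⟨k₁ + k₂, fun i => if i < k₁ then f₁ i else f₂ (i - k₁),
    fun i => if i < k₁ then t₁ i else t₂ (i - k₁), by omega, by simp [hk₁, hf₁0],
    by simp [hf₂k], ?_, ?_, ?_⟩
  · intro i hi
    by_cases h : i < k₁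
    · by_cases h' : i + 1 < k₁
      · simpa [h, h'] using hl₁ i h
      · obtain rfl : k₁ = i + 1 := by omega
        simpa [hf₂0, hf₁k] using hl₁ i h
    · simpa [h, show ¬ i + 1 < k₁ by omega, show i + 1 - k₁ = i - k₁ + 1 by omega]
        using hl₂ (i - k₁) (by omega)
  · intro i hi
    by_cases h : i < k₁
    · simpa [h] using ht₁ i h
    · have := ht₂ (i - k₁) (by omega)
      have := ht₁ (k₁ - 1) (by omega)
      simp only [if_neg h]
      omega
  · intro i j hij hj
    by_cases hi : i < k₁ <;> by_cases hj' : j < k₁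
    · simpa [hi, hj'] using hs₁ i j hij hj'
    · have := hlast i hi
      have := ht₂ (j - k₁) (by omega)
      simp only [if_pos hi, if_neg hj']
      omega
    · omega
    · simpa [hi, hj'] using hs₂ (i - k₁) (j - k₁) (by omega) (by omega)

theorem InfJ.trans {m a b : M} (h₁ : InfJ link m a) (h₂ : InfJ link a b) : InfJ link m b :=
  fun r => (h₁ r).trans_infJ h₂

theorem PoolRel.symm {m m' : M} (h : PoolRel link m m') : PoolRel link m' m :=
  h.imp Eq.symm And.symm

theorem PoolRel.trans {a b c : M} (h₁ : PoolRel link a b) (h₂ : PoolRel link b c) :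
    PoolRel link a c := by
  rcases h₁ with rfl | ⟨hab, hba⟩
  · exact h₂
  rcases h₂ with rfl | ⟨hbc, hcb⟩
  · exact Or.inr ⟨hab, hba⟩
  · exact Or.inr ⟨hab.trans hbc, hcb.trans hba⟩

theorem InfJ.trans_poolRel {m a b : M} (h₁ : InfJ link m a) (h₂ : PoolRel link a b) :
    InfJ link m b := by
  rcases h₂ with rfl | ⟨hab, -⟩
  exacts [h₁, h₁.trans hab]

theorem IsPool.mem_iff_poolRel {P : Set M} (hP : IsPool link P) {m₀ m : M} (hm₀ : m₀ ∈ P) :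
    m ∈ P ↔ PoolRel link m₀ m := by
  obtain ⟨b, rfl⟩ := hP
  exact ⟨fun hm => (PoolRel.symm hm₀).trans hm, fun h => PoolRel.trans hm₀ h⟩

theorem IsPool.sourcePool_of_forall_infJ {P : Set M} (hP : IsPool link P) {m₀ : M}
    (hm₀ : m₀ ∈ P) (hbroadcast : ∀ m, m ≠ m₀ → InfJ link m₀ m) : SourcePool link P := by
  refine ⟨hP, fun m hm m' hm' hmm' => hm ?_⟩
  have hm₀m : InfJ link m₀ m := hbroadcast m fun h => hm (h ▸ hm₀)
  have hmm₀ : InfJ link m m₀ := hmm'.trans_poolRel ((hP.mem_iff_poolRel hm').1 hm₀)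
  exact (hP.mem_iff_poolRel hm₀).2 (Or.inr ⟨hm₀m, hmm₀⟩)

theorem Filter.exists_mem_frequently_eq {α β : Type*} [Finite β] {l : Filter α} [l.NeBot]
    {g : α → β} {s : Set β} (h : ∀ᶠ a in l, g a ∈ s) : ∃ b ∈ s, ∃ᶠ a in l, g a = b := by
  have hfreq : ∃ᶠ a in l, ∃ b, b ∈ s ∧ g a = b := h.frequently.mono fun a ha => ⟨g a, ha, rfl⟩
  obtain ⟨b, hb⟩ := frequently_exists.1 hfreq
  exact ⟨b, hb.exists.choose_spec.1, hb.mono fun _ => And.right⟩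

theorem forall_infJ_of_frequently_mined {B : Type} {f : ℕ → B} {mnr : B → M} {mt : B → ℕ}
    (hmono : StrictMono (fun n => mt (f n)))
    (hrecv : ∀ n : ℕ, ∀ m : M, m ≠ mnr (f n) → Journey link (mt (f n)) (mnr (f n)) m)
    {m₀ : M} (hm₀ : ∃ᶠ n in atTop, mnr (f n) = m₀) (m : M) (hm : m ≠ m₀) :
    InfJ link m₀ m := by
  intro r
  obtain ⟨n, hrn, rfl⟩ := frequently_atTop.1 hm₀ r
  exact (hrecv n m hm).mono (hrn.trans (hmono.id_le n))

end

/-- In a locally decisive computation, every infinite branch of the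
blockchain belongs to a source pool. The branch `f` (with miners `mnr`, mining rounds
`mt`, strictly increasing) belongs to pool `P`; local decisiveness is modeled by every
miner receiving every block of the branch, which requires a journey from the mining
miner starting after the mining round. Conclusion: `P` is a source pool. -/
theorem stmt_12 {M B : Type} [Fintype M] (link : ℕ → M → M → Prop)
    (f : ℕ → B) (mnr : B → M) (mt : B → ℕ)
    (hmono : StrictMono (fun n => mt (f n)))
    (P : Set M) (hP : IsPool link P)
    (hbelong : ∃ n0 : ℕ, ∀ n, n0 ≤ n → mnr (f n) ∈ P)
    (hrecv : ∀ n : ℕ, ∀ m : M, m ≠ mnr (f n) → Journey link (mt (f n)) (mnr (f n)) m) :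
    SourcePool link P := by
  obtain ⟨m₀, hm₀P, hm₀⟩ := exists_mem_frequently_eq (eventually_atTop.2 hbelong)
  exact hP.sourcePool_of_forall_infJ hm₀P (forall_infJ_of_frequently_mined hmono hrecv hm₀)
end
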